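/- Let m ≥ 2 and let μ(K_{1,m}) be the Mycielskian of the star K_{1,m}, with root w and with u₀ the shadow vertex of the unique vertex of maximum degree in K_{1,m}. Then every automorphism φ of μ(K_{1,m}) satisfies φ(w) ∈ {w, u₀}. -/

import Mathlib

open SimpleGraph

universe u

/-- A distinguishing edge coloring: no nontrivial automorphism preserves the coloring. -/
def IsDistEdgeColoring {V : Type u} (G : SimpleGraph V) {C : Type*} (c : G.edgeSet → C) : Prop :=
  ∀ φ : G ≃g G, (∀ e : G.edgeSet, c (φ.mapEdgeSet e) = c e) → ∀ v, φ v = v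

/-- The distinguishing index: least number of colors in a distinguishing edge coloring. -/
noncomputable def distIndex {V : Type u} (G : SimpleGraph V) : ℕ :=
  sInf {k : ℕ | ∃ c : G.edgeSet → Fin k, IsDistEdgeColoring G c}

/-- The star `K_{1,m}` with center `0`. -/
def starGraph (m : ℕ) : SimpleGraph (Fin (m + 1)) :=
  SimpleGraph.fromRel fun a _ => a = 0

/-- The Mycielskian: `Sum.inl a` are original vertices, `Sum.inr (Sum.inl a)` their
shadows, and `Sum.inr (Sum.inr _)` the root. -/
def myc {V : Type u} (G : SimpleGraph V) : SimpleGraph (V ⊕ V ⊕ PUnit.{u+1}) :=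
  SimpleGraph.fromRel fun x y =>
    match x, y with
    | Sum.inl a, Sum.inl b => G.Adj a b
    | Sum.inl a, Sum.inr (Sum.inl b) => G.Adj a b
    | Sum.inr (Sum.inl _), Sum.inr (Sum.inr _) => True
    | _, _ => False

/-- The generalized Mycielskian with `t` extra levels: `Sum.inl (j, a)` is the level-`j`
copy of vertex `a` (level `0` being the original vertices), and `Sum.inr _` is the root. -/
def genMyc {V : Type u} (G : SimpleGraph V) (t : ℕ) :
    SimpleGraph ((Fin (t + 1) × V) ⊕ PUnit.{u+1}) :=
  SimpleGraph.fromRel fun x y =>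
    match x, y with
    | Sum.inl (j, a), Sum.inl (k, b) =>
        ((j.val = 0 ∧ k.val = 0) ∨ k.val = j.val + 1) ∧ G.Adj a b
    | Sum.inl (j, _), Sum.inr _ => j.val = t
    | _, _ => False


/-! Automorphisms preserve degrees. In `μ(G)` the root has degree `|V(G)|`, the shadow `u_a` has
degree `deg a + 1` and the original vertex `v_a` has degree `2 deg a`. For the star `K_{1,m}` the
root thus has degree `m + 1`, while `v₀` has degree `2m`, every other `v_a` and `u_a` has
degree `2`, and `u₀` has degree `m + 1`; for `m ≥ 2` only the root and `u₀` share a degree. -/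

theorem SimpleGraph.degree_eq_ncard {V : Type u} (G : SimpleGraph V) (v : V)
    [Fintype (G.neighborSet v)] : G.degree v = (G.neighborSet v).ncard := by
  rw [← card_neighborSet_eq_degree, Set.ncard_eq_toFinset_card', Set.toFinset_card]

section Mycielskian

variable {V : Type u} (G : SimpleGraph V)

theorem myc_neighborSet_root :
    (myc G).neighborSet (Sum.inr (Sum.inr PUnit.unit)) = Set.range (Sum.inr ∘ Sum.inl) := by
  ext (a | a | ⟨⟩) <;> simp [myc]

theorem myc_neighborSet_shadow (a : V) :
    (myc G).neighborSet (Sum.inr (Sum.inl a)) =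
      insert (Sum.inr (Sum.inr PUnit.unit)) (Sum.inl '' G.neighborSet a) := by
  ext (b | b | ⟨⟩) <;> simp [myc, G.adj_comm a]

theorem myc_neighborSet_original (a : V) :
    (myc G).neighborSet (Sum.inl a) =
      Sum.inl '' G.neighborSet a ∪ (Sum.inr ∘ Sum.inl) '' G.neighborSet a := by
  ext (b | b | ⟨⟩) <;> simp [myc, G.adj_comm a]
  exact fun h => h.ne'

theorem myc_degree_root [Fintype ((myc G).neighborSet (Sum.inr (Sum.inr PUnit.unit)))] :
    (myc G).degree (Sum.inr (Sum.inr PUnit.unit)) = Nat.card V := by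
  rw [degree_eq_ncard, myc_neighborSet_root,
    Set.ncard_range_of_injective (Sum.inr_injective.comp Sum.inl_injective)]

theorem myc_degree_shadow (a : V) [Fintype (G.neighborSet a)]
    [Fintype ((myc G).neighborSet (Sum.inr (Sum.inl a)))] :
    (myc G).degree (Sum.inr (Sum.inl a)) = G.degree a + 1 := by
  rw [degree_eq_ncard, myc_neighborSet_shadow, Set.ncard_insert_of_notMem (by simp),
    Set.ncard_image_of_injective _ Sum.inl_injective, degree_eq_ncard]

theorem myc_degree_original (a : V) [Fintype (G.neighborSet a)]
    [Fintype ((myc G).neighborSet (Sum.inl a))] :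
    (myc G).degree (Sum.inl a) = 2 * G.degree a := by
  rw [degree_eq_ncard, myc_neighborSet_original, Set.ncard_union_eq (by simp [Set.disjoint_left]),
    Set.ncard_image_of_injective _ Sum.inl_injective,
    Set.ncard_image_of_injective _ (Sum.inr_injective.comp Sum.inl_injective), degree_eq_ncard]
  ring

end Mycielskian

theorem starGraph_neighborSet {m : ℕ} (a : Fin (m + 1)) :
    (_root_.starGraph m).neighborSet a = if a = 0 then {0}ᶜ else {0} := by
  ext b
  split_ifs <;> simp only [mem_neighborSet, _root_.starGraph, fromRel_adj] <;> grind

theorem starGraph_degree {m : ℕ} (a : Fin (m + 1)) [Fintype ((_root_.starGraph m).neighborSet a)] :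
    (_root_.starGraph m).degree a = if a = 0 then m else 1 := by
  rw [degree_eq_ncard, starGraph_neighborSet]
  split_ifs
  · rw [Set.ncard_compl]
    simp
  · simp

theorem myc_star_root_image (m : ℕ) (hm : 2 ≤ m)
    (φ : myc (_root_.starGraph m) ≃g myc (_root_.starGraph m)) :
    φ (Sum.inr (Sum.inr PUnit.unit)) = Sum.inr (Sum.inr PUnit.unit) ∨
      φ (Sum.inr (Sum.inr PUnit.unit)) = Sum.inr (Sum.inl 0) := by
  classical
  have hdeg := φ.degree_eq (Sum.inr (Sum.inr PUnit.unit))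
  rw [myc_degree_root, Nat.card_fin] at hdeg
  rcases hφ : φ (Sum.inr (Sum.inr PUnit.unit)) with a | a | ⟨⟩
  · rw [hφ, myc_degree_original, starGraph_degree] at hdeg
    split_ifs at hdeg <;> omega
  · rw [hφ, myc_degree_shadow, starGraph_degree] at hdeg
    split_ifs at hdeg with ha
    · exact .inr (ha ▸ rfl)
    · omega
  · exact .inl rfl
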